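/- Let 1 \leq K \leq N and M \geq 1 be integers and L \geq 0 a real number. Let W_1,\dots,W_M, Q, and A_\theta^{(i)} (for \theta \in [M], i \in [N]) be random variables; for \Lambda \subseteq [M] write W_\Lambda = (W_j)_{j\in\Lambda}. Assume: (i) H(A_\theta^\Gamma | W_\Lambda, Q) = H(A_{\theta'}^\Gamma | W_\Lambda, Q) for all \theta, \theta' \in [M], all \Lambda \subseteq [M], and all \Gamma \subseteq [N] with |\Gamma| = K; (ii) H(W_\theta | A_\theta^{[N]}, W_\Lambda, Q) = 0 for all \theta \in [M] and all \Lambda \subseteq [M]; (iii) H(W_\theta | W_\Lambda, Q) = L for all \Lambda \subseteq [M] and all \theta \in [M] \setminus \Lambda; (iv) H(A_\theta^{[N]} | W_{[M]}, Q) = 0 for all \theta \in [M]; and (v) the scheme is capacity-achieving, i.e., \sum_{i=1}^{N} H(A_\theta^{(i)}) = L \cdot \sum_{i=0}^{M-1} (K/N)^i =: D for every \theta \in [M]. Then for every \theta \in [M]: (a) H(A_\theta^{[N]} | Q) = D; (b) H(A_\theta^{[N]} | W_\theta, Q) = D - L; and (c) H(A_\theta^{[N]} | W_{[M]\setminus\{\theta\}},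 Q) = L. -/

import Mathlib

/-!
Since the answers together with any side information decode the demanded message, and a message
outside `Λ` keeps entropy `L` given `W_Λ` and `Q`, peeling off messages one at a time gives
`H(A_θ | W_Λ, Q) = L + H(A_θ | W_{Λ ∪ {θ}}, Q)`. Han's inequality, applied to answers whose
`K`-subsets look alike for all demands, gives `(K/N) H(A_θ' | W_Λ, Q) ≤ H(A_θ | W_Λ, Q)`.
Iterating over the messages yields `H(A_θ | Q) ≥ L ∑_{i<M} (K/N)^i = D`, while subadditivity and
the capacity assumption give `H(A_θ | Q) ≤ ∑_i H(A_θ^{(i)}) = D`. Hence all these inequalities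
are tight, which is (a) and (b); (c) is the last peeling step, as `H(A_θ | W_{[M]}, Q) = 0`.
-/

/-- Shannon entropy (natural logarithm) of a finitely-valued random variable `X`
on a finite probability space with probability mass function `μ`. -/
noncomputable def entropy {Ω V : Type*} [Fintype Ω] [Fintype V] [DecidableEq V]
    (μ : Ω → ℝ) (X : Ω → V) : ℝ :=
  ∑ v : V, Real.negMulLog (∑ ω ∈ Finset.univ.filter (fun ω => X ω = v), μ ω)

/-- Conditional Shannon entropy `H(X | Y) = H(X, Y) - H(Y)`. -/
noncomputable def condEntropy {Ω V U : Type*} [Fintype Ω] [Fintype V] [Fintype U]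
    [DecidableEq V] [DecidableEq U] (μ : Ω → ℝ) (X : Ω → V) (Y : Ω → U) : ℝ :=
  entropy μ (fun ω => (X ω, Y ω)) - entropy μ Y

/-- The joint random variable `(A i)_{i ∈ Γ}` of the subfamily of `(A i)_{i ∈ [N]}`
indexed by the subset `Γ`. -/
def jointOn {Ω V : Type*} {N : ℕ} (Γ : Finset (Fin N)) (A : Fin N → Ω → V) :
    Ω → (Fin N → Option V) :=
  fun ω i => if i ∈ Γ then some (A i ω) else none

open Finset Real Function

section Law

variable {Ω : Type*} [Fintype Ω] {μ : Ω → ℝ}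

def law {V : Type*} [DecidableEq V] (μ : Ω → ℝ) (X : Ω → V) (v : V) : ℝ :=
  ∑ ω ∈ univ.filter (fun ω => X ω = v), μ ω

lemma law_nonneg {V : Type*} [DecidableEq V] (hμ : ∀ ω, 0 ≤ μ ω) (X : Ω → V) (v : V) :
    0 ≤ law μ X v :=
  sum_nonneg fun ω _ => hμ ω

lemma law_comp {V U : Type*} [Fintype V] [DecidableEq V] [DecidableEq U]
    (X : Ω → V) (f : V → U) (u : U) :
    law μ (fun ω => f (X ω)) u = ∑ v ∈ univ.filter (fun v => f v = u), law μ X v := by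
  unfold law
  rw [← sum_fiberwise_of_maps_to (g := X) (t := univ.filter (fun v => f v = u))
    (fun ω hω => by simpa using hω)]
  refine sum_congr rfl fun v hv => sum_congr ?_ fun _ _ => rfl
  ext ω
  simp only [mem_filter, mem_univ, true_and] at hv ⊢
  exact ⟨And.right, fun h => ⟨h ▸ hv, h⟩⟩

lemma law_pair_comp {V U U' : Type*} [Fintype U] [DecidableEq V] [DecidableEq U]
    [DecidableEq U'] (X : Ω → V) (Z : Ω → U) (g : U → U') (v : V) (w : U') :
    law μ (fun ω => (X ω, g (Z ω))) (v, w) =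
      ∑ u ∈ univ.filter (fun u => g u = w), law μ (fun ω => (X ω, Z ω)) (v, u) := by
  unfold law
  rw [← sum_fiberwise_of_maps_to (g := Z) (t := univ.filter (fun u => g u = w))
    (fun ω hω => by simp_all)]
  refine sum_congr rfl fun u hu => sum_congr ?_ fun _ _ => rfl
  ext ω
  simp only [mem_filter, mem_univ, true_and, Prod.mk.injEq] at hu ⊢
  exact ⟨fun h => ⟨h.1.1, h.2⟩, fun h => ⟨⟨h.1, h.2 ▸ hu⟩, h.2⟩⟩

lemma sum_law_pair {V U : Type*} [Fintype V] [DecidableEq V] [DecidableEq U]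
    (X : Ω → V) (Z : Ω → U) (u : U) :
    ∑ v, law μ (fun ω => (X ω, Z ω)) (v, u) = law μ Z u := by
  unfold law
  rw [← sum_fiberwise_of_maps_to (s := univ.filter (fun ω => Z ω = u)) (g := X)
    (fun ω _ => mem_univ _)]
  refine sum_congr rfl fun v _ => sum_congr ?_ fun _ _ => rfl
  ext ω
  simp only [mem_filter, mem_univ, true_and, Prod.mk.injEq]
  exact and_comm

lemma law_pair_le {V U : Type*} [DecidableEq V] [DecidableEq U] (hμ : ∀ ω, 0 ≤ μ ω)
    (X : Ω → V) (Z : Ω → U) (v : V) (u : U) :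
    law μ (fun ω => (X ω, Z ω)) (v, u) ≤ law μ Z u :=
  sum_le_sum_of_subset_of_nonneg (fun ω hω => by simp_all) fun ω _ _ => hμ ω

end Law

lemma negMulLog_sum_le {ι : Type*} (s : Finset ι) {a : ι → ℝ} (ha : ∀ i ∈ s, 0 ≤ a i) :
    negMulLog (∑ i ∈ s, a i) ≤ ∑ i ∈ s, negMulLog (a i) := by
  simp only [negMulLog, neg_mul, sum_neg_distrib, neg_le_neg_iff, sum_mul]
  refine sum_le_sum fun i hi => ?_
  rcases (ha i hi).eq_or_lt with h | h
  · simp [← h]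
  · exact mul_le_mul_of_nonneg_left (log_le_log h (single_le_sum ha hi)) h.le

/-- The log-sum inequality. -/
lemma sum_mul_log_sub_log_le {ι : Type*} (s : Finset ι) {a b : ι → ℝ}
    (ha : ∀ i ∈ s, 0 ≤ a i) (hab : ∀ i ∈ s, a i ≤ b i) :
    ∑ i ∈ s, a i * (log (b i) - log (a i)) ≤
      (∑ i ∈ s, a i) * (log (∑ i ∈ s, b i) - log (∑ i ∈ s, a i)) := by
  obtain ⟨A, hA_def⟩ : ∃ A, ∑ i ∈ s, a i = A := ⟨_, rfl⟩
  obtain ⟨B, hB_def⟩ : ∃ B, ∑ i ∈ s, b i = B := ⟨_, rfl⟩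
  rw [hA_def, hB_def]
  rcases (hA_def ▸ sum_nonneg ha : 0 ≤ A).eq_or_lt with hA | hA
  · have hzero := (sum_eq_zero_iff_of_nonneg ha).1 (hA_def.trans hA.symm)
    rw [← hA, zero_mul]
    exact (sum_eq_zero fun i hi => by rw [hzero i hi, zero_mul]).le
  have hB : 0 < B := hA.trans_le (hA_def ▸ hB_def ▸ sum_le_sum hab)
  -- `log x ≤ x - 1` at `x = (b i * A) / (a i * B)`
  have key : ∀ i ∈ s, a i * (log (b i) - log (a i)) ≤
      a i * (log B - log A) + (b i * (A / B) - a i) := by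
    intro i hi
    rcases (ha i hi).eq_or_lt with h | h
    · have := (ha i hi).trans (hab i hi)
      rw [← h]
      simp only [zero_mul, zero_add, sub_zero]
      positivity
    · have hb : 0 < b i := h.trans_le (hab i hi)
      have hlog := log_le_sub_one_of_pos (show 0 < b i * A / (a i * B) by positivity)
      rw [log_div (by positivity) (by positivity), log_mul hb.ne' hA.ne',
        log_mul h.ne' hB.ne'] at hlog
      have hmul : a i * (b i * A / (a i * B) - 1) = b i * (A / B) - a i := by field_simp
      nlinarith [mul_le_mul_of_nonneg_left hlog h.le]
  calc ∑ i ∈ s, a i * (log (b i) - log (a i))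
      ≤ ∑ i ∈ s, (a i * (log B - log A) + (b i * (A / B) - a i)) := sum_le_sum key
    _ = A * (log B - log A) := by
      rw [sum_add_distrib, sum_sub_distrib, ← sum_mul, ← sum_mul, hA_def, hB_def,
        mul_div_cancel₀ _ hB.ne', sub_self, add_zero]

section Entropy

variable {Ω V U U' : Type*} [Fintype Ω] [Fintype V] [Fintype U] [Fintype U']
  [DecidableEq V] [DecidableEq U] [DecidableEq U'] {μ : Ω → ℝ}

lemma entropy_eq_sum_law (μ : Ω → ℝ) (X : Ω → V) :
    entropy μ X = ∑ v, negMulLog (law μ X v) :=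
  rfl

lemma entropy_comp_le (hμ : ∀ ω, 0 ≤ μ ω) (X : Ω → V) (f : V → U) :
    entropy μ (fun ω => f (X ω)) ≤ entropy μ X := by
  calc ∑ u, negMulLog (law μ (fun ω => f (X ω)) u)
      ≤ ∑ u, ∑ v ∈ univ.filter (fun v => f v = u), negMulLog (law μ X v) :=
        sum_le_sum fun u _ => law_comp X f u ▸ negMulLog_sum_le _ fun v _ => law_nonneg hμ X v
    _ = ∑ v, negMulLog (law μ X v) := sum_fiberwise_of_maps_to (fun v _ => mem_univ _) _

lemma entropy_le_of_factorsThrough [Nonempty Ω] (hμ : ∀ ω, 0 ≤ μ ω) {X : Ω → V} {Y : Ω → U}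
    (h : FactorsThrough Y X) : entropy μ Y ≤ entropy μ X := by
  have : Nonempty U := .map Y ‹_›
  obtain ⟨e, rfl⟩ := (factorsThrough_iff Y).1 h
  exact entropy_comp_le hμ X e

lemma entropy_congr [Nonempty Ω] (hμ : ∀ ω, 0 ≤ μ ω) {X : Ω → V} {Y : Ω → U}
    (h : ∀ ω ω', X ω = X ω' ↔ Y ω = Y ω') : entropy μ X = entropy μ Y :=
  (entropy_le_of_factorsThrough hμ fun _ _ hY => (h _ _).2 hY).antisymm
    (entropy_le_of_factorsThrough hμ fun _ _ hX => (h _ _).1 hX)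

lemma entropy_const (hμ1 : ∑ ω, μ ω = 1) (c : V) : entropy μ (fun _ => c) = 0 := by
  refine sum_eq_zero fun v _ => ?_
  by_cases hv : c = v
  · simp [hv, hμ1]
  · simp [hv]

lemma condEntropy_nonneg (hμ : ∀ ω, 0 ≤ μ ω) (X : Ω → V) (Z : Ω → U) :
    0 ≤ condEntropy μ X Z :=
  sub_nonneg.2 (entropy_comp_le hμ (fun ω => (X ω, Z ω)) Prod.snd)

lemma condEntropy_congr_right [Nonempty Ω] (hμ : ∀ ω, 0 ≤ μ ω) (X : Ω → V) {Z : Ω → U}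
    {Z' : Ω → U'} (h : ∀ ω ω', Z ω = Z ω' ↔ Z' ω = Z' ω') :
    condEntropy μ X Z = condEntropy μ X Z' := by
  unfold condEntropy
  rw [entropy_congr hμ h, entropy_congr hμ (X := fun ω => (X ω, Z ω))
    (Y := fun ω => (X ω, Z' ω)) fun ω ω' => by simp only [Prod.mk.injEq, h]]

lemma condEntropy_add_condEntropy_comm [Nonempty Ω] (hμ : ∀ ω, 0 ≤ μ ω) (X : Ω → V)
    (Y : Ω → U) (Z : Ω → U') :
    condEntropy μ X (fun ω => (Y ω, Z ω)) + condEntropy μ Y Z =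
      condEntropy μ Y (fun ω => (X ω, Z ω)) + condEntropy μ X Z := by
  have : entropy μ (fun ω => (X ω, Y ω, Z ω)) = entropy μ (fun ω => (Y ω, X ω, Z ω)) :=
    entropy_congr hμ fun ω ω' => by simp only [Prod.mk.injEq]; tauto
  unfold condEntropy
  linarith

lemma condEntropy_eq_sum (X : Ω → V) (Z : Ω → U) :
    condEntropy μ X Z = ∑ v, ∑ u, law μ (fun ω => (X ω, Z ω)) (v, u) *
      (log (law μ Z u) - log (law μ (fun ω => (X ω, Z ω)) (v, u))) := by
  have hZ :
      entropy μ Z = ∑ v, ∑ u, law μ (fun ω => (X ω, Z ω)) (v, u) * -log (law μ Z u) := by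
    rw [entropy_eq_sum_law, sum_comm]
    refine sum_congr rfl fun u _ => ?_
    rw [← sum_mul, sum_law_pair, negMulLog, neg_mul, mul_neg]
  rw [condEntropy, hZ, entropy_eq_sum_law, Fintype.sum_prod_type, ← sum_sub_distrib]
  refine sum_congr rfl fun v _ => ?_
  rw [← sum_sub_distrib]
  refine sum_congr rfl fun u _ => ?_
  rw [negMulLog]
  ring

lemma condEntropy_le_condEntropy_comp (hμ : ∀ ω, 0 ≤ μ ω) (X : Ω → V) (Z : Ω → U)
    (g : U → U') : condEntropy μ X Z ≤ condEntropy μ X (fun ω => g (Z ω)) := by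
  rw [condEntropy_eq_sum, condEntropy_eq_sum]
  refine sum_le_sum fun v _ => ?_
  rw [← sum_fiberwise_of_maps_to (g := g) (t := univ) fun u _ => mem_univ _]
  refine sum_le_sum fun w _ => ?_
  rw [law_pair_comp X Z g v w, law_comp Z g w]
  exact sum_mul_log_sub_log_le _ (fun u _ => law_nonneg hμ _ _)
    fun u _ => law_pair_le hμ X Z v u

lemma condEntropy_le_of_factorsThrough [Nonempty Ω] (hμ : ∀ ω, 0 ≤ μ ω) (X : Ω → V)
    {Z : Ω → U} {Z' : Ω → U'} (h : FactorsThrough Z' Z) :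
    condEntropy μ X Z ≤ condEntropy μ X Z' := by
  have : Nonempty U' := .map Z' ‹_›
  obtain ⟨e, rfl⟩ := (factorsThrough_iff Z').1 h
  exact condEntropy_le_condEntropy_comp hμ X Z e

lemma condEntropy_le_entropy [Nonempty Ω] (hμ : ∀ ω, 0 ≤ μ ω) (hμ1 : ∑ ω, μ ω = 1)
    (X : Ω → V) (Z : Ω → U) : condEntropy μ X Z ≤ entropy μ X := by
  calc condEntropy μ X Z ≤ condEntropy μ X (fun _ => ()) :=
        condEntropy_le_of_factorsThrough hμ X fun _ _ _ => rfl
    _ = entropy μ X := by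
      rw [condEntropy, entropy_const hμ1, sub_zero]
      exact entropy_congr hμ fun ω ω' => by simp

end Entropy

section JointOn

@[simp]
lemma jointOn_eq_jointOn_iff {Ω β : Type*} {N : ℕ} {Γ : Finset (Fin N)} {B : Fin N → Ω → β}
    {ω ω' : Ω} :
    jointOn Γ B ω = jointOn Γ B ω' ↔ ∀ i ∈ Γ, B i ω = B i ω' := by
  simp only [jointOn, funext_iff]
  refine forall_congr' fun i => ?_
  by_cases hi : i ∈ Γ <;> simp [hi]

lemma jointOn_prod_factorsThrough {Ω β U : Type*} {N : ℕ} {T S : Finset (Fin N)}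
    (hTS : T ⊆ S) (B : Fin N → Ω → β) (Y : Ω → U) :
    FactorsThrough (fun ω => (jointOn T B ω, Y ω)) (fun ω => (jointOn S B ω, Y ω)) :=
  fun _ _ h => by
    simp only [Prod.mk.injEq, jointOn_eq_jointOn_iff] at h ⊢
    exact ⟨fun i hi => h.1 i (hTS hi), h.2⟩

variable {Ω β U : Type*} [Fintype Ω] [Nonempty Ω] [Fintype β] [Fintype U] [DecidableEq β]
  [DecidableEq U] {μ : Ω → ℝ} {N : ℕ}

lemma condEntropy_jointOn_mono (hμ : ∀ ω, 0 ≤ μ ω) (B : Fin N → Ω → β)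
    {T S : Finset (Fin N)} (hTS : T ⊆ S) (Y : Ω → U) :
    condEntropy μ (jointOn T B) Y ≤ condEntropy μ (jointOn S B) Y := by
  have := entropy_le_of_factorsThrough hμ (jointOn_prod_factorsThrough hTS B Y)
  unfold condEntropy
  linarith

lemma condEntropy_jointOn_antitone {V : Type*} [Fintype V] [DecidableEq V]
    (hμ : ∀ ω, 0 ≤ μ ω) (X : Ω → V) (B : Fin N → Ω → β) {T S : Finset (Fin N)}
    (hTS : T ⊆ S) (Y : Ω → U) :
    condEntropy μ X (fun ω => (jointOn S B ω, Y ω)) ≤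
      condEntropy μ X (fun ω => (jointOn T B ω, Y ω)) :=
  condEntropy_le_of_factorsThrough hμ X (jointOn_prod_factorsThrough hTS B Y)

lemma condEntropy_jointOn_insert (hμ : ∀ ω, 0 ≤ μ ω) (B : Fin N → Ω → β) (i : Fin N)
    (S : Finset (Fin N)) (Y : Ω → U) :
    condEntropy μ (jointOn (insert i S) B) Y =
      condEntropy μ (B i) (fun ω => (jointOn S B ω, Y ω)) + condEntropy μ (jointOn S B) Y := by
  have : entropy μ (fun ω => (jointOn (insert i S) B ω, Y ω)) =
      entropy μ (fun ω => (B i ω, jointOn S B ω, Y ω)) :=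
    entropy_congr hμ fun ω ω' => by simp [and_assoc]
  unfold condEntropy
  linarith

lemma condEntropy_jointOn_eq_sum (hμ : ∀ ω, 0 ≤ μ ω) (B : Fin N → Ω → β) (Y : Ω → U)
    (S : Finset (Fin N)) :
    condEntropy μ (jointOn S B) Y =
      ∑ i ∈ S, condEntropy μ (B i) (fun ω => (jointOn (S.filter (· < i)) B ω, Y ω)) := by
  induction S using Finset.induction_on_max with
  | empty =>
    have : entropy μ (fun ω => (jointOn ∅ B ω, Y ω)) = entropy μ Y :=
      entropy_congr hμ fun ω ω' => by simp
    simp [condEntropy, this]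
  | insert a S ha ih =>
    have haS : a ∉ S := fun h => (ha a h).false
    have hlt : (insert a S).filter (· < a) = S := by
      rw [filter_insert, if_neg (lt_irrefl a), filter_true_of_mem ha]
    have hS : ∀ i ∈ S, (insert a S).filter (· < i) = S.filter (· < i) := fun i hi => by
      rw [filter_insert, if_neg (ha i hi).asymm]
    rw [condEntropy_jointOn_insert hμ, ih, sum_insert haS, hlt]
    exact congrArg _ (sum_congr rfl fun i hi => by rw [hS i hi])

lemma shearer_inequality {ι : Type*} [Fintype ι] (hμ : ∀ ω, 0 ≤ μ ω) (B : Fin N → Ω → β)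
    (Y : Ω → U) (Γ : ι → Finset (Fin N)) (c : ℕ) (hc : ∀ i, c ≤ #{j | i ∈ Γ j}) :
    c * condEntropy μ (jointOn univ B) Y ≤ ∑ j, condEntropy μ (jointOn (Γ j) B) Y := by
  set g : Fin N → ℝ := fun i =>
    condEntropy μ (B i) (fun ω => (jointOn (univ.filter (· < i)) B ω, Y ω))
  calc c * condEntropy μ (jointOn univ B) Y = ∑ i, c * g i := by
        rw [condEntropy_jointOn_eq_sum hμ, mul_sum]
    _ ≤ ∑ i, #{j | i ∈ Γ j} * g i := sum_le_sum fun i _ =>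
        mul_le_mul_of_nonneg_right (by exact_mod_cast hc i) (condEntropy_nonneg hμ _ _)
    _ = ∑ j, ∑ i ∈ Γ j, g i := by
        rw [sum_comm' (t' := univ) (s' := fun i => univ.filter fun j => i ∈ Γ j)
          fun j i => by simp]
        simp
    _ ≤ ∑ j, condEntropy μ (jointOn (Γ j) B) Y := sum_le_sum fun j _ => by
        rw [condEntropy_jointOn_eq_sum hμ]
        exact sum_le_sum fun i _ => condEntropy_jointOn_antitone hμ _ B
          (monotone_filter_left _ (subset_univ _)) Y

open Fin.NatCast in
lemma exists_uniform_cover {n K : ℕ} (hK : K ≤ n) :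
    ∃ Γ : Fin n → Finset (Fin n), (∀ j, #(Γ j) = K) ∧ ∀ i, #{j | i ∈ Γ j} = K := by
  rcases n with _ | n
  · exact ⟨finZeroElim, finZeroElim, finZeroElim⟩
  -- the cyclic windows `{j, j + 1, …, j + K - 1}`
  set S : Finset (Fin (n + 1)) := (range K).image Nat.cast
  have hS : #S = K := by
    rw [card_image_of_injOn, card_range]
    intro a ha b hb hab
    simp only [coe_range, Set.mem_Iio] at ha hb
    simpa [Fin.ext_iff, Fin.val_natCast, Nat.mod_eq_of_lt (ha.trans_le hK),
      Nat.mod_eq_of_lt (hb.trans_le hK)] using hab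
  refine ⟨fun j => S.map (Equiv.addLeft j).toEmbedding, fun j => by rw [card_map, hS],
    fun i => ?_⟩
  rw [← hS]
  refine card_nbij' (i - ·) (i - ·) (fun j hj => ?_) (fun s hs => ?_)
    (fun j _ => sub_sub_cancel i j) (fun s _ => sub_sub_cancel i s)
  · simpa [mem_map_equiv, neg_add_eq_sub] using hj
  · simpa [mem_map_equiv, neg_add_eq_sub] using hs

lemma han_inequality (hμ : ∀ ω, 0 ≤ μ ω) (B : Fin N → Ω → β) (Y : Ω → U) {K : ℕ}
    (hKN : K ≤ N) {c : ℝ}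
    (hc : ∀ Γ : Finset (Fin N), #Γ = K → condEntropy μ (jointOn Γ B) Y ≤ c) :
    K * condEntropy μ (jointOn univ B) Y ≤ N * c := by
  obtain ⟨Γ, hcard, hcover⟩ := exists_uniform_cover hKN
  calc K * condEntropy μ (jointOn univ B) Y
      ≤ ∑ j, condEntropy μ (jointOn (Γ j) B) Y :=
        shearer_inequality hμ B Y Γ K fun i => (hcover i).ge
    _ ≤ ∑ _j : Fin N, c := sum_le_sum fun j _ => hc _ (hcard j)
    _ = N * c := by simp

lemma div_mul_condEntropy_le_of_condEntropy_eq (hμ : ∀ ω, 0 ≤ μ ω) {B B' : Fin N → Ω → β}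
    (Y : Ω → U) {K : ℕ} (hKN : K ≤ N)
    (h : ∀ Γ : Finset (Fin N), #Γ = K →
      condEntropy μ (jointOn Γ B) Y = condEntropy μ (jointOn Γ B') Y) :
    (K / N : ℝ) * condEntropy μ (jointOn univ B) Y ≤ condEntropy μ (jointOn univ B') Y := by
  have := han_inequality hμ B Y hKN fun Γ hΓ =>
    (h Γ hΓ).trans_le (condEntropy_jointOn_mono hμ B' (subset_univ Γ) Y)
  rcases N.eq_zero_or_pos with rfl | hN
  · simpa using condEntropy_nonneg hμ (jointOn univ B') Y
  · rwa [div_mul_eq_mul_div, div_le_iff₀ (by positivity), mul_comm _ (N : ℝ)]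

lemma condEntropy_jointOn_univ_le_sum_entropy (hμ : ∀ ω, 0 ≤ μ ω) (hμ1 : ∑ ω, μ ω = 1)
    (B : Fin N → Ω → β) (Y : Ω → U) :
    condEntropy μ (jointOn univ B) Y ≤ ∑ i, entropy μ (B i) := by
  have := shearer_inequality hμ B Y (fun i => {i}) 1 fun i => one_le_card.2 ⟨i, by simp⟩
  calc condEntropy μ (jointOn univ B) Y ≤ ∑ i, condEntropy μ (jointOn {i} B) Y := by
        simpa using this
    _ ≤ ∑ i, entropy μ (jointOn {i} B) :=
        sum_le_sum fun i _ => condEntropy_le_entropy hμ hμ1 _ _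
    _ = ∑ i, entropy μ (B i) := sum_congr rfl fun i _ => entropy_congr hμ fun ω ω' => by simp

lemma condEntropy_eq_add_of_decodable {V γ δ : Type*} [Fintype V] [DecidableEq V] [Fintype γ]
    [DecidableEq γ] [Fintype δ] [DecidableEq δ] {M : ℕ} (hμ : ∀ ω, 0 ≤ μ ω) (X : Ω → V)
    (W : Fin M → Ω → γ) (Q : Ω → δ) (θ : Fin M) (Λ : Finset (Fin M))
    (hdec : condEntropy μ (W θ) (fun ω => (X ω, jointOn Λ W ω, Q ω)) = 0) :
    condEntropy μ X (fun ω => (jointOn Λ W ω, Q ω)) =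
      condEntropy μ (W θ) (fun ω => (jointOn Λ W ω, Q ω)) +
        condEntropy μ X (fun ω => (jointOn (insert θ Λ) W ω, Q ω)) := by
  have := condEntropy_add_condEntropy_comm hμ X (W θ) fun ω => (jointOn Λ W ω, Q ω)
  rw [hdec, zero_add, condEntropy_congr_right hμ X
    (Z' := fun ω => (jointOn (insert θ Λ) W ω, Q ω)) fun ω ω' => by simp [and_assoc]] at this
  linarith

end JointOn

lemma mul_geom_sum_le_of_forall_insert {ι : Type*} [Fintype ι] [DecidableEq ι]
    {f : ι → Finset ι → ℝ} {r L : ℝ} (hr : 0 ≤ r) (hf : ∀ θ Λ, 0 ≤ f θ Λ)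
    (hstep : ∀ θ θ' Λ, θ' ∉ Λ → r * (L + f θ' (insert θ' Λ)) ≤ f θ Λ) (m : ℕ) :
    ∀ Λ : Finset ι, #Λ + m ≤ Fintype.card ι → ∀ θ,
      L * (r * ∑ i ∈ range m, r ^ i) ≤ f θ Λ := by
  induction m with
  | zero => exact fun Λ _ θ => by simpa using hf θ Λ
  | succ m ih =>
    intro Λ hΛ θ
    obtain ⟨θ', -, hθ'⟩ := exists_mem_notMem_of_card_lt_card (s := Λ) (t := univ)
      (by rw [card_univ]; omega)
    have := ih (insert θ' Λ) (by rw [card_insert_of_notMem hθ']; omega) θ'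
    calc L * (r * ∑ i ∈ range (m + 1), r ^ i)
          = r * (L + L * (r * ∑ i ∈ range m, r ^ i)) := by rw [geom_sum_succ]; ring
      _ ≤ r * (L + f θ' (insert θ' Λ)) := by gcongr
      _ ≤ f θ Λ := hstep θ θ' Λ hθ'

theorem capacity_achieving_entropy_identities_general
    {Ω α γ δ : Type*} [Fintype Ω] [Fintype α] [Fintype γ] [Fintype δ]
    [DecidableEq α] [DecidableEq γ] [DecidableEq δ]
    (N K M : ℕ) (hKN : K ≤ N) (L : ℝ)
    (μ : Ω → ℝ) (hμ : ∀ ω, 0 ≤ μ ω) (hμ1 : ∑ ω, μ ω = 1)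
    (A : Fin M → Fin N → Ω → α) (W : Fin M → Ω → γ) (Q : Ω → δ)
    (D : ℝ) (hD : D = L * ∑ i ∈ Finset.range M, ((K : ℝ) / N) ^ i)
    (hsym : ∀ θ θ' : Fin M, ∀ Λ : Finset (Fin M), ∀ Γ : Finset (Fin N), Γ.card = K →
      condEntropy μ (jointOn Γ (A θ)) (fun ω => (jointOn Λ W ω, Q ω)) =
        condEntropy μ (jointOn Γ (A θ')) (fun ω => (jointOn Λ W ω, Q ω)))
    (hcorr : ∀ θ : Fin M, ∀ Λ : Finset (Fin M),
      condEntropy μ (W θ)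
        (fun ω => (jointOn Finset.univ (A θ) ω, jointOn Λ W ω, Q ω)) = 0)
    (hrec : ∀ Λ : Finset (Fin M), ∀ θ : Fin M, θ ∉ Λ →
      condEntropy μ (W θ) (fun ω => (jointOn Λ W ω, Q ω)) = L)
    (hdet : ∀ θ : Fin M,
      condEntropy μ (jointOn Finset.univ (A θ))
        (fun ω => (jointOn Finset.univ W ω, Q ω)) = 0)
    (hcap : ∀ θ : Fin M, ∑ i : Fin N, entropy μ (A θ i) = D) :
    ∀ θ : Fin M,
      condEntropy μ (jointOn Finset.univ (A θ)) Q = D ∧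
      condEntropy μ (jointOn Finset.univ (A θ)) (fun ω => (W θ ω, Q ω)) = D - L ∧
      condEntropy μ (jointOn Finset.univ (A θ))
        (fun ω => (jointOn (Finset.univ \ {θ}) W ω, Q ω)) = L := by
  intro θ
  obtain ⟨m, rfl⟩ : ∃ m, M = m + 1 := ⟨M - 1, by have := θ.pos; omega⟩
  have : Nonempty Ω := univ_nonempty_iff.1 (nonempty_of_sum_ne_zero (hμ1 ▸ one_ne_zero))
  have hpeel : ∀ θ Λ, θ ∉ Λ →
      condEntropy μ (jointOn univ (A θ)) (fun ω => (jointOn Λ W ω, Q ω)) =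
        L + condEntropy μ (jointOn univ (A θ)) (fun ω => (jointOn (insert θ Λ) W ω, Q ω)) :=
    fun θ Λ hθ => hrec Λ θ hθ ▸ condEntropy_eq_add_of_decodable hμ _ W Q θ Λ (hcorr θ Λ)
  have hlower := mul_geom_sum_le_of_forall_insert
    (f := fun θ Λ => condEntropy μ (jointOn univ (A θ)) (fun ω => (jointOn Λ W ω, Q ω)))
    (by positivity) (fun _ _ => condEntropy_nonneg hμ _ _)
    (fun θ θ' Λ hθ' => hpeel θ' Λ hθ' ▸
      div_mul_condEntropy_le_of_condEntropy_eq hμ _ hKN (hsym θ' θ Λ))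
    m {θ} (by simp [add_comm]) θ
  have hupper := hcap θ ▸ condEntropy_jointOn_univ_le_sum_entropy hμ hμ1 (A θ) Q
  have hfirst := hpeel θ ∅ (notMem_empty θ)
  rw [insert_empty, condEntropy_congr_right hμ _ (Z := fun ω => (jointOn ∅ W ω, Q ω))
    (Z' := Q) fun ω ω' => by simp] at hfirst
  rw [← condEntropy_congr_right hμ _ (Z := fun ω => (jointOn {θ} W ω, Q ω))
    (Z' := fun ω => (W θ ω, Q ω)) fun ω ω' => by simp]
  rw [hD, geom_sum_succ, mul_add, mul_one] at hupper ⊢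
  refine ⟨by linarith, by linarith, ?_⟩
  rw [hpeel θ _ (by simp), insert_sdiff_self_of_mem (mem_univ θ), hdet, add_zero]

/-- Lemma 5: entropy identities for capacity-achieving coded PIR schemes, where
`D = L · ∑_{i=0}^{M-1} (K/N)^i` is the download size:
(a) `H(A_θ^{[N]} | Q) = D`, (b) `H(A_θ^{[N]} | W_θ, Q) = D - L`,
(c) `H(A_θ^{[N]} | W_{[M]∖{θ}}, Q) = L`. -/
theorem capacity_achieving_entropy_identities
    {Ω α γ δ : Type*} [Fintype Ω] [Fintype α] [Fintype γ] [Fintype δ]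
    [DecidableEq α] [DecidableEq γ] [DecidableEq δ]
    (N K M : ℕ) (hK : 1 ≤ K) (hKN : K ≤ N) (hM : 1 ≤ M) (L : ℝ) (hL : 0 ≤ L)
    (μ : Ω → ℝ) (hμ : ∀ ω, 0 ≤ μ ω) (hμ1 : ∑ ω, μ ω = 1)
    (A : Fin M → Fin N → Ω → α) (W : Fin M → Ω → γ) (Q : Ω → δ)
    (D : ℝ) (hD : D = L * ∑ i ∈ Finset.range M, ((K : ℝ) / N) ^ i)
    (hsym : ∀ θ θ' : Fin M, ∀ Λ : Finset (Fin M), ∀ Γ : Finset (Fin N), Γ.card = K →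
      condEntropy μ (jointOn Γ (A θ)) (fun ω => (jointOn Λ W ω, Q ω)) =
        condEntropy μ (jointOn Γ (A θ')) (fun ω => (jointOn Λ W ω, Q ω)))
    (hcorr : ∀ θ : Fin M, ∀ Λ : Finset (Fin M),
      condEntropy μ (W θ)
        (fun ω => (jointOn Finset.univ (A θ) ω, jointOn Λ W ω, Q ω)) = 0)
    (hrec : ∀ Λ : Finset (Fin M), ∀ θ : Fin M, θ ∉ Λ →
      condEntropy μ (W θ) (fun ω => (jointOn Λ W ω, Q ω)) = L)
    (hdet : ∀ θ : Fin M,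
      condEntropy μ (jointOn Finset.univ (A θ))
        (fun ω => (jointOn Finset.univ W ω, Q ω)) = 0)
    (hcap : ∀ θ : Fin M, ∑ i : Fin N, entropy μ (A θ i) = D) :
    ∀ θ : Fin M,
      condEntropy μ (jointOn Finset.univ (A θ)) Q = D ∧
      condEntropy μ (jointOn Finset.univ (A θ)) (fun ω => (W θ ω, Q ω)) = D - L ∧
      condEntropy μ (jointOn Finset.univ (A θ))
        (fun ω => (jointOn (Finset.univ \ {θ}) W ω, Q ω)) = L :=
  capacity_achieving_entropy_identities_general N K M hKN L μ hμ hμ1 A W Q D hD hsym hcorr hrec hdet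
    hcap
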